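/- For every λ with 0 < λ < 1 and every k with 0 < k < 1, the series Σ_{m=0}^∞ (λ^{2m+1}/(2m+1)) · F_m(1−k²) converges and its sum equals F(λ,k), where F_m(x) = Σ_{j=0}^m ((−m)_j (1/2)_j / ((1)_j j!)) x^j. -/

import Mathlib

/-!
The Taylor coefficients `a n = (1/2)_n / n!` of `(1 - x)^(-1/2)` have the closed-form finite
differences `(-1)^n Δ^n a i = (1/2)_i (1/2)_n / (n + i)!` (a Beta integral in disguise).
Expanding `(1 - y)^j` binomially in `F_m(1 - y)` and regrouping turns this into
`F_m(1 - y) = ∑ i ≤ m, a i * a (m - i) * y^i`, so `∑ F_m(1 - k²) t^(2m)` is the Cauchy product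
of the series of `(1 - k²t²)^(-1/2)` and `(1 - t²)^(-1/2)`. All its terms are nonnegative and
it converges at `t = λ`, so it may be integrated term by term over `[0, λ]`.
-/

open Real Finset

/-- Pochhammer symbol `(a)_n = a (a+1) ⋯ (a+n-1)`. -/
noncomputable def poch (a : ℝ) (n : ℕ) : ℝ := ∏ i ∈ Finset.range n, (a + i)

/-- Terminating Gauss hypergeometric function `₂F₁(-m, 1/2; 1; x)`. -/
noncomputable def F2F1 (m : ℕ) (x : ℝ) : ℝ :=
  ∑ j ∈ Finset.range (m + 1),
    poch (-(m : ℝ)) j * poch (1/2) j / (poch 1 j * (Nat.factorial j : ℝ)) * x ^ j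

open scoped Nat fwdDiff

lemma poch_succ (a : ℝ) (n : ℕ) : poch a (n + 1) = poch a n * (a + n) :=
  prod_range_succ _ _

lemma poch_eq_eval_ascPochhammer (a : ℝ) (n : ℕ) : poch a n = (ascPochhammer ℝ n).eval a := by
  induction n with
  | zero => simp [poch]
  | succ n ih => rw [poch_succ, ih, ascPochhammer_succ_eval]

lemma poch_one (n : ℕ) : poch 1 n = n ! := by
  rw [poch_eq_eval_ascPochhammer, ascPochhammer_eval_one]

lemma poch_neg_natCast (m j : ℕ) : poch (-(m : ℝ)) j = (-1) ^ j * m.descFactorial j := by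
  rw [poch_eq_eval_ascPochhammer, ascPochhammer_eval_neg_eq_descPochhammer,
    descPochhammer_eval_eq_descFactorial]

noncomputable def invSqrtCoeff (n : ℕ) : ℝ := poch (1 / 2) n / n !

lemma invSqrtCoeff_nonneg (n : ℕ) : 0 ≤ invSqrtCoeff n :=
  div_nonneg (prod_nonneg fun _ _ => by positivity) (by positivity)

lemma ringChoose_eq_invSqrtCoeff (n : ℕ) :
    Ring.choose ((1 / 2 : ℝ) + n - 1) n = invSqrtCoeff n := by
  rw [Ring.choose_eq_smul, Polynomial.descPochhammer_smeval_eq_ascPochhammer,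
    Polynomial.ascPochhammer_smeval_eq_eval, invSqrtCoeff, poch_eq_eval_ascPochhammer, smul_eq_mul,
    inv_mul_eq_div]
  ring_nf

lemma F2F1_eq_sum (m : ℕ) (x : ℝ) :
    F2F1 m x = ∑ j ∈ range (m + 1), (m.choose j : ℝ) * invSqrtCoeff j * (-x) ^ j := by
  refine sum_congr rfl fun j _ => ?_
  rw [poch_neg_natCast, poch_one, Nat.descFactorial_eq_factorial_mul_choose, invSqrtCoeff, neg_pow]
  have : (j ! : ℝ) ≠ 0 := by positivity
  push_cast
  field_simp
  ring

lemma sum_neg_one_pow_mul_choose_mul_eq_fwdDiff_iter {R : Type*} [CommRing R] (f : ℕ → R)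
    (n i : ℕ) :
    ∑ k ∈ range (n + 1), (-1) ^ k * (n.choose k : R) * f (i + k) = (-1) ^ n * (Δ_[1])^[n] f i := by
  rw [fwdDiff_iter_eq_sum_shift, mul_sum]
  refine sum_congr rfl fun k hk => ?_
  obtain ⟨d, rfl⟩ := Nat.exists_eq_add_of_le (Nat.lt_succ_iff.mp (mem_range.mp hk))
  have hsign : (-1 : R) ^ (d + d) = 1 := Even.neg_one_pow ⟨d, rfl⟩
  simp only [Nat.add_sub_cancel_left, zsmul_eq_mul, smul_eq_mul, mul_one]
  push_cast
  linear_combination (-(-1) ^ k * ((k + d).choose k : R) * f (i + k)) * hsign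

lemma sum_choose_mul_sub_one_pow {R : Type*} [CommRing R] (f : ℕ → R) (m : ℕ) (y : R) :
    ∑ j ∈ range (m + 1), (m.choose j : R) * f j * (y - 1) ^ j =
      ∑ i ∈ range (m + 1), (m.choose i : R) *
        (∑ k ∈ range (m - i + 1), (-1) ^ k * ((m - i).choose k : R) * f (i + k)) * y ^ i := by
  let g : ℕ → ℕ → R := fun i k => (-1) ^ k * (m.choose i * (m - i).choose k : ℕ) * f (i + k) * y ^ i
  calc _ = ∑ j ∈ range (m + 1), ∑ i ∈ range (j + 1), g i (j - i) := by
        refine sum_congr rfl fun j hj => ?_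
        rw [sub_pow, mul_sum]
        refine sum_congr rfl fun i hi => ?_
        have hij : i ≤ j := Nat.lt_succ_iff.mp (mem_range.mp hi)
        obtain ⟨d, rfl⟩ := Nat.exists_eq_add_of_le hij
        have hc := congrArg (Nat.cast : ℕ → R) (Nat.choose_mul (n := m) hij)
        rw [Nat.add_sub_cancel_left] at hc
        push_cast at hc
        simp only [g, Nat.add_sub_cancel_left, one_pow, mul_one]
        push_cast
        rw [show i + (i + d) = 2 * i + d by ring, pow_add, pow_mul, neg_one_sq, one_pow, one_mul]
        linear_combination (f (i + d) * y ^ i * (-1) ^ d) * hc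
    _ = ∑ i ∈ range (m + 1), ∑ k ∈ range (m + 1 - i), g i k := sum_range_diag_flip _ g
    _ = _ := by
        refine sum_congr rfl fun i hi => ?_
        rw [show m + 1 - i = m - i + 1 by grind, mul_sum, sum_mul]
        refine sum_congr rfl fun k _ => ?_
        simp only [g]
        push_cast
        ring

lemma fwdDiff_iter_invSqrtCoeff (n i : ℕ) :
    (Δ_[1])^[n] invSqrtCoeff i = (-1) ^ n * (poch (1 / 2) i * poch (1 / 2) n / (n + i)!) := by
  induction n generalizing i with
  | zero => simp [invSqrtCoeff, poch]
  | succ n ih =>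
    rw [Function.iterate_succ_apply', fwdDiff, ih, ih, poch_succ, poch_succ,
      show n + (i + 1) = n + i + 1 by ring, show n + 1 + i = n + i + 1 by ring,
      Nat.factorial_succ]
    have : ((n + i)! : ℝ) ≠ 0 := by positivity
    push_cast
    field_simp
    ring

lemma F2F1_one_sub (m : ℕ) (y : ℝ) :
    F2F1 m (1 - y) = ∑ i ∈ range (m + 1), invSqrtCoeff i * invSqrtCoeff (m - i) * y ^ i := by
  rw [F2F1_eq_sum, neg_sub, sum_choose_mul_sub_one_pow]
  refine sum_congr rfl fun i hi => ?_
  have him : i ≤ m := Nat.lt_succ_iff.mp (mem_range.mp hi)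
  rw [sum_neg_one_pow_mul_choose_mul_eq_fwdDiff_iter, fwdDiff_iter_invSqrtCoeff,
    Nat.sub_add_cancel him, Nat.cast_choose ℝ him, invSqrtCoeff, invSqrtCoeff]
  have hsign : ((-1 : ℝ) ^ (m - i)) ^ 2 = 1 := by rw [← pow_mul, pow_mul', neg_one_sq, one_pow]
  have : (i ! : ℝ) ≠ 0 := by positivity
  have : ((m - i)! : ℝ) ≠ 0 := by positivity
  have : (m ! : ℝ) ≠ 0 := by positivity
  field_simp
  rw [hsign, one_mul]

lemma F2F1_one_sub_nonneg (m : ℕ) {y : ℝ} (hy : 0 ≤ y) : 0 ≤ F2F1 m (1 - y) := by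
  rw [F2F1_one_sub]
  exact sum_nonneg fun i _ =>
    mul_nonneg (mul_nonneg (invSqrtCoeff_nonneg _) (invSqrtCoeff_nonneg _)) (pow_nonneg hy _)

lemma hasSum_invSqrtCoeff_mul_pow {x : ℝ} (hx : |x| < 1) :
    HasSum (fun n => invSqrtCoeff n * x ^ n) (1 / √(1 - x)) := by
  have h := (one_div_one_sub_rpow_hasFPowerSeriesOnBall_zero (1 / 2)).hasSum
    (y := x) (by simpa [enorm_eq_nnnorm, ← NNReal.coe_lt_one] using hx)
  simp only [FormalMultilinearSeries.ofScalars_apply_eq, ringChoose_eq_invSqrtCoeff, smul_eq_mul,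
    zero_add] at h
  rw [Real.sqrt_eq_rpow]
  simpa only [mul_comm] using h

lemma summable_norm_invSqrtCoeff_mul_pow {x : ℝ} (hx : |x| < 1) :
    Summable fun n => ‖invSqrtCoeff n * x ^ n‖ := by
  simpa [abs_of_nonneg (invSqrtCoeff_nonneg _)] using
    (hasSum_invSqrtCoeff_mul_pow (x := |x|) (by rwa [abs_abs])).summable

lemma hasSum_F2F1_one_sub_mul_pow {y s : ℝ} (hs : |s| < 1) (hys : |y * s| < 1) :
    HasSum (fun m => F2F1 m (1 - y) * s ^ m) (1 / √((1 - s) * (1 - y * s))) := by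
  have h := hasSum_sum_range_mul_of_summable_norm (summable_norm_invSqrtCoeff_mul_pow hys)
    (summable_norm_invSqrtCoeff_mul_pow hs)
  rw [(hasSum_invSqrtCoeff_mul_pow hys).tsum_eq, (hasSum_invSqrtCoeff_mul_pow hs).tsum_eq,
    one_div_mul_one_div, ← Real.sqrt_mul (by linarith [le_abs_self (y * s)]),
    mul_comm (1 - y * s)] at h
  refine h.congr_fun fun m => ?_
  rw [F2F1_one_sub, sum_mul]
  refine sum_congr rfl fun i hi => ?_
  rw [mul_pow, ← pow_sub_mul_pow s (Nat.lt_succ_iff.mp (mem_range.mp hi))]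
  ring

lemma hasSum_intervalIntegral_mul_pow {c : ℕ → ℝ} {e : ℕ → ℕ} {f : ℝ → ℝ} {l : ℝ} (hl : 0 ≤ l)
    (hc : ∀ m, 0 ≤ c m) (hf : ∀ t ∈ Set.Icc 0 l, HasSum (fun m => c m * t ^ e m) (f t)) :
    HasSum (fun m => c m * (l ^ (e m + 1) / (e m + 1))) (∫ t in 0..l, f t) := by
  have h := intervalIntegral.hasSum_integral_of_dominated_convergence (μ := MeasureTheory.volume)
    (F := fun m t => c m * t ^ e m) (a := 0) (b := l) (fun m _ => c m * l ^ e m)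
    (fun m => (continuous_const.mul (continuous_pow _)).aestronglyMeasurable)
    (fun m => .of_forall fun t ht => ?_) (.of_forall fun _ _ => (hf l ⟨hl, le_rfl⟩).summable)
    intervalIntegrable_const
    (.of_forall fun t ht => hf t ?_)
  · simpa [integral_pow] using h
  · rw [Set.uIoc_of_le hl] at ht
    rw [norm_mul, norm_pow, Real.norm_of_nonneg (hc m), Real.norm_of_nonneg ht.1.le]
    exact mul_le_mul_of_nonneg_left (pow_le_pow_left₀ ht.1.le ht.2 _) (hc m)
  · exact Set.Ioc_subset_Icc_self (by rwa [Set.uIoc_of_le hl] at ht)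

theorem stmt10 (l k : ℝ) (hl0 : 0 < l) (hl1 : l < 1) (hk0 : 0 < k) (hk1 : k < 1) :
    HasSum (fun m : ℕ => l ^ (2 * m + 1) / (2 * (m : ℝ) + 1) * F2F1 m (1 - k ^ 2))
      (∫ t in (0:ℝ)..l, 1 / Real.sqrt ((1 - t ^ 2) * (1 - k ^ 2 * t ^ 2))) := by
  have hseries : ∀ t ∈ Set.Icc 0 l, HasSum (fun m => F2F1 m (1 - k ^ 2) * t ^ (2 * m))
      (1 / √((1 - t ^ 2) * (1 - k ^ 2 * t ^ 2))) := by
    intro t ⟨ht0, htl⟩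
    have ht2 : t ^ 2 < 1 := by nlinarith
    have hkt2 : k ^ 2 * t ^ 2 < 1 := by nlinarith
    simpa only [pow_mul] using hasSum_F2F1_one_sub_mul_pow (y := k ^ 2) (s := t ^ 2)
      (by rwa [abs_of_nonneg (by positivity)]) (by rwa [abs_of_nonneg (by positivity)])
  convert hasSum_intervalIntegral_mul_pow hl0.le (fun m => F2F1_one_sub_nonneg m (sq_nonneg k))
    hseries using 2 with m
  push_cast
  ring
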